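/- Let $f(s)=e^{-s^{\lambda}}$ for $s>0$ with $\lambda>2$, and let $N\ge 1$. Then the radial self-similar profile equation $-s f'(s)=a(f(s))\big[f''(s)+\frac{N-1}{s}f'(s)\big]$ holds for all $s$ with $\lambda s^{\lambda}>\lambda+N-2$, where $a$ is defined on $(0,1)$ by $a(v)=\frac{|\ln v|^{2/\lambda}}{\lambda|\ln v|-(\lambda+N-2)}$. -/

import Mathlib

/-!
Writing `E = exp (-s ^ λ)`, one has `f' = -λ s^(λ-1) E` and
`f'' + (N-1)/s f' = λ s^(λ-2) (λ s^λ - (λ+N-2)) E`, while `|ln f| = s^λ` gives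
`a (f s) = s² / (λ s^λ - (λ+N-2))`. The factor `λ s^λ - (λ+N-2)` cancels and both sides equal
`λ s^λ E`.
-/

open Real

section ExpNegRpow

variable {lam t : ℝ}

theorem hasDerivAt_exp_neg_rpow (ht : 0 < t) :
    HasDerivAt (fun x : ℝ => exp (-x ^ lam)) (-lam * t ^ (lam - 1) * exp (-t ^ lam)) t :=
  ((hasDerivAt_rpow_const (p := lam) (Or.inl ht.ne')).neg).exp.congr_deriv
    (by simp only [Pi.neg_apply]; ring)

theorem deriv_exp_neg_rpow (ht : 0 < t) :
    deriv (fun x : ℝ => exp (-x ^ lam)) t = -lam * t ^ (lam - 1) * exp (-t ^ lam) :=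
  (hasDerivAt_exp_neg_rpow ht).deriv

theorem deriv_deriv_exp_neg_rpow (ht : 0 < t) :
    deriv (deriv fun x : ℝ => exp (-x ^ lam)) t =
      lam * t ^ (lam - 2) * (lam * t ^ lam - (lam - 1)) * exp (-t ^ lam) := by
  have h_eq : deriv (fun x : ℝ => exp (-x ^ lam)) =ᶠ[nhds t]
      fun x => -lam * x ^ (lam - 1) * exp (-x ^ lam) := by
    filter_upwards [Ioi_mem_nhds ht] with x hx using deriv_exp_neg_rpow hx
  have h_pow : HasDerivAt (fun x : ℝ => -lam * x ^ (lam - 1))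
      (-lam * ((lam - 1) * t ^ (lam - 2))) t := by
    have := (hasDerivAt_rpow_const (p := lam - 1) (Or.inl ht.ne')).const_mul (-lam)
    rwa [sub_sub, one_add_one_eq_two] at this
  have h_prod : HasDerivAt (fun x : ℝ => -lam * x ^ (lam - 1) * exp (-x ^ lam))
      (-lam * ((lam - 1) * t ^ (lam - 2)) * exp (-t ^ lam)
        + -lam * t ^ (lam - 1) * (-lam * t ^ (lam - 1) * exp (-t ^ lam))) t :=
    h_pow.mul (hasDerivAt_exp_neg_rpow ht)
  rw [h_eq.deriv_eq, h_prod.deriv, rpow_sub ht, rpow_sub ht, rpow_one, rpow_two]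
  field_simp
  ring

theorem radial_laplacian_exp_neg_rpow (c : ℝ) (ht : 0 < t) :
    deriv (deriv fun x : ℝ => exp (-x ^ lam)) t
        + (c - 1) / t * deriv (fun x : ℝ => exp (-x ^ lam)) t =
      lam * t ^ (lam - 2) * (lam * t ^ lam - (lam + c - 2)) * exp (-t ^ lam) := by
  rw [deriv_deriv_exp_neg_rpow ht, deriv_exp_neg_rpow ht, rpow_sub ht, rpow_sub ht, rpow_one,
    rpow_two]
  field_simp
  ring

end ExpNegRpow

theorem stmt_7_general (N : ℕ) (lam : ℝ) (hlam : 2 < lam)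
    (f : ℝ → ℝ) (hf : ∀ s, f s = Real.exp (-s ^ lam))
    (a : ℝ → ℝ)
    (ha : ∀ v ∈ Set.Ioo (0 : ℝ) 1,
        a v = |Real.log v| ^ (2 / lam) / (lam * |Real.log v| - (lam + N - 2)))
    (s : ℝ) (hs : 0 < s) (hcond : lam + N - 2 < lam * s ^ lam) :
    -s * deriv f s = a (f s) * (deriv (deriv f) s + (N - 1) / s * deriv f s) := by
  obtain rfl : f = fun x => exp (-x ^ lam) := funext hf
  have h_pos : 0 < s ^ lam := rpow_pos_of_pos hs lam
  have h_mem : exp (-s ^ lam) ∈ Set.Ioo (0 : ℝ) 1 :=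
    ⟨exp_pos _, exp_lt_one_iff.mpr (neg_lt_zero.mpr h_pos)⟩
  have h_abs : |log (exp (-s ^ lam))| = s ^ lam := by rw [log_exp, abs_neg, abs_of_pos h_pos]
  have h_sq : (s ^ lam) ^ (2 / lam) = s ^ (2 : ℝ) := by
    rw [← rpow_mul hs.le, mul_div_cancel₀ _ (zero_lt_two.trans hlam).ne']
  rw [ha _ h_mem, h_abs, h_sq, radial_laplacian_exp_neg_rpow _ hs, deriv_exp_neg_rpow hs,
    rpow_sub hs, rpow_sub hs, rpow_one, rpow_two]
  field_simp [(sub_pos.mpr hcond).ne']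

theorem stmt_7 (N : ℕ) (hN : 1 ≤ N) (lam : ℝ) (hlam : 2 < lam)
    (f : ℝ → ℝ) (hf : ∀ s, f s = Real.exp (-s ^ lam))
    (a : ℝ → ℝ)
    (ha : ∀ v ∈ Set.Ioo (0 : ℝ) 1,
        a v = |Real.log v| ^ (2 / lam) / (lam * |Real.log v| - (lam + N - 2)))
    (s : ℝ) (hs : 0 < s) (hcond : lam + N - 2 < lam * s ^ lam) :
    -s * deriv f s = a (f s) * (deriv (deriv f) s + (N - 1) / s * deriv f s) :=
  stmt_7_general N lam hlam f hf a ha s hs hcond
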